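/- arXiv:1711.04066 — 12 statements merged into one kernel-verified Lean document; each statement's English description precedes it below -/
import Mathlib

section
/- Let M = {g_1, …, g_m} be a finite set of items with a fixed ordering and let v be a submodular valuation on M with v(M) = 1. Suppose there is no subset S of M with both v(S) ≥ 1/2 and v(M\S) ≥ 1/2. For each k, let δ_k = v({g_1, …, g_k}) − v({g_1, …, g_{k−1}}), and for S ⊆ M let χ(S) = Σ_{k : g_k ∈ S} δ_k. Then for every subset S of M, v(S) ≥ 1/2 if and only if χ(S) ≥ 1/2. -/
/-!
By submodularity, `χ T ≤ v T` for every `T`: the marginal `δ k` of `k` over all items below it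
is at most its marginal over the items of `T` below it, and the latter telescope to `v T`.
Moreover `χ S + χ (M \ S) = χ M = v M = 1`. So `χ S ≥ 1/2` forces `v S ≥ 1/2`, while `v S ≥ 1/2`
with `χ S < 1/2` would give `v (M \ S) ≥ χ (M \ S) > 1/2`, a forbidden split.
-/

open Finset

section Telescope

variable {α β : Type*} [LinearOrder α] [AddCommGroup β]

lemma Finset.filter_lt_union_singleton {s : Finset α} {k : α} (hk : k ∈ s) :
    s.filter (· < k) ∪ {k} = s.filter (· ≤ k) := by
  ext j
  simp only [mem_union, mem_filter, mem_singleton, le_iff_lt_or_eq]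
  constructor
  · rintro (⟨hj, hlt⟩ | rfl)
    exacts [⟨hj, .inl hlt⟩, ⟨hk, .inr rfl⟩]
  · rintro ⟨hj, hlt | rfl⟩
    exacts [.inl ⟨hj, hlt⟩, .inr rfl]

theorem Finset.sum_sub_filter_le_filter_lt (v : Finset α → β) (T : Finset α) :
    ∑ k ∈ T, (v (T.filter (· ≤ k)) - v (T.filter (· < k))) = v T - v ∅ := by
  induction T using Finset.induction_on_max with
  | empty => simp
  | insert a T ha ih =>
    have haT : a ∉ T := fun h => lt_irrefl a (ha a h)
    have h_le : (insert a T).filter (· ≤ a) = insert a T :=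
      filter_true_of_mem fun x hx => by
        rcases mem_insert.1 hx with rfl | hx
        exacts [le_rfl, (ha x hx).le]
    have h_lt : (insert a T).filter (· < a) = T := by
      rw [filter_insert, if_neg (lt_irrefl a), filter_true_of_mem ha]
    have h_below : ∀ k ∈ T, ∀ p : α → Prop, [DecidablePred p] → (∀ k', p k' → k' ≤ k) →
        (insert a T).filter p = T.filter p := by
      intro k hk p _ hp
      rw [filter_insert, if_neg fun hpa => (ha k hk).not_ge (hp a hpa)]
    rw [sum_insert haT, h_le, h_lt,
      sum_congr rfl fun k hk => by
        rw [h_below k hk (· ≤ k) fun _ => id, h_below k hk (· < k) fun _ => le_of_lt],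
      ih]
    abel

end Telescope

section Submodular

variable {α : Type*} [LinearOrder α] [Fintype α]

/-- The paper's `δ_k`. -/
def prefixMarginal (v : Finset α → ℝ) (k : α) : ℝ :=
  v (univ.filter (· ≤ k)) - v (univ.filter (· < k))

lemma sum_prefixMarginal_univ (v : Finset α → ℝ) :
    ∑ k, prefixMarginal v k = v univ - v ∅ :=
  Finset.sum_sub_filter_le_filter_lt v univ

lemma sum_prefixMarginal_le (v : Finset α → ℝ)
    (hsubmod : ∀ S T : Finset α, S ⊆ T → ∀ g : α, v (T ∪ {g}) - v T ≤ v (S ∪ {g}) - v S)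
    (T : Finset α) :
    ∑ k ∈ T, prefixMarginal v k ≤ v T - v ∅ := by
  rw [← Finset.sum_sub_filter_le_filter_lt v T]
  refine sum_le_sum fun k hk => ?_
  have h := hsubmod _ _ (filter_subset_filter (· < k) (subset_univ T)) k
  rwa [filter_lt_union_singleton (mem_univ k), filter_lt_union_singleton hk] at h

end Submodular

/-- For a submodular valuation `v` on `Fin m` with `v M = 1`, assuming no set `S` has
both `v S ≥ 1/2` and `v (M \ S) ≥ 1/2`, we have `v S ≥ 1/2 ↔ χ S ≥ 1/2` for all `S`,
where `χ S = ∑ k ∈ S, δ k` and `δ k = v {j | j ≤ k} - v {j | j < k}`. -/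
theorem half_iff_chi_half (m : ℕ) (v : Finset (Fin m) → ℝ)
    (h0 : v ∅ = 0)
    (hsubmod : ∀ S T : Finset (Fin m), S ⊆ T → ∀ g : Fin m,
      v (T ∪ {g}) - v T ≤ v (S ∪ {g}) - v S)
    (hM : v Finset.univ = 1)
    (hcut : ¬ ∃ S : Finset (Fin m), v S ≥ 1 / 2 ∧ v (Finset.univ \ S) ≥ 1 / 2)
    (S : Finset (Fin m)) :
    v S ≥ 1 / 2 ↔
      ∑ k ∈ S, (v (Finset.univ.filter (fun j => j ≤ k)) -
          v (Finset.univ.filter (fun j => j < k))) ≥ 1 / 2 := by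
  change v S ≥ 1 / 2 ↔ ∑ k ∈ S, prefixMarginal v k ≥ 1 / 2
  have hχS := sum_prefixMarginal_le v hsubmod S
  have hχSc := sum_prefixMarginal_le v hsubmod (univ \ S)
  have hχ_total : ∑ k ∈ S, prefixMarginal v k + ∑ k ∈ univ \ S, prefixMarginal v k = 1 := by
    rw [← compl_eq_univ_sdiff, sum_add_sum_compl, sum_prefixMarginal_univ, hM, h0, sub_zero]
  constructor
  · intro hvS
    by_contra! hχ
    exact hcut ⟨S, hvS, by linarith⟩
  · intro hχ
    linarith
end

section
/- Let v be a subadditive valuation on a finite set M of items with v(M) = 1 and let c ∈ [0, 1) be a real number. Assume the cut-failed condition holds, and let S be a c-minimal bundle. Then for every g ∈ S, max( v(S) − v(S\{g}), v((M\S) ∪ {g}) − v(M\S) ) ≥ (1 − c)/2. -/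
/-- A bundle `S ⊆ M` is `c`-acceptable for valuation `v` if `v S ≥ c * v (M \ S)`. -/
def Acceptable {ι : Type*} [DecidableEq ι] (M : Finset ι) (v : Finset ι → ℝ)
    (c : ℝ) (S : Finset ι) : Prop :=
  v S ≥ c * v (M \ S)

/-- A bundle `S ⊆ M` is `c`-minimal if it is `c`-acceptable but no `S \ {g}` with
`g ∈ S` is `c`-acceptable. -/
def CMinimal {ι : Type*} [DecidableEq ι] (M : Finset ι) (v : Finset ι → ℝ)
    (c : ℝ) (S : Finset ι) : Prop :=
  S ⊆ M ∧ Acceptable M v c S ∧ ∀ g ∈ S, ¬ Acceptable M v c (S \ {g})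

/-- The cut-failed condition: no subset `S` of `M` has both `S` and `M \ S`
`c`-acceptable. -/
def CutFailed {ι : Type*} [DecidableEq ι] (M : Finset ι) (v : Finset ι → ℝ)
    (c : ℝ) : Prop :=
  ¬ ∃ S : Finset ι, S ⊆ M ∧ Acceptable M v c S ∧ Acceptable M v c (M \ S)

/- If both marginals of `g` were below `(1 - c)/2`, write `a = v S`, `b = v (M \ S)`,
`a' = v (S \ {g})`, `b' = v (M \ S ∪ {g})`. The cut-failed condition gives `b < c a` and
minimality gives `a' < c b'`; chaining through the small marginals yields
`a - d < a' < c b' < c (b + d) < c (c a + d)` with `d = (1 - c)/2`, i.e. `a < 1/2`.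
Then `a + b < (1 + c) a < 1 = v M`, contradicting subadditivity. -/

section Bundles

variable {ι : Type*} [DecidableEq ι] {M : Finset ι} {v : Finset ι → ℝ} {c : ℝ} {S : Finset ι}

theorem le_add_sdiff_of_subadditive
    (hsub : ∀ S T : Finset ι, S ⊆ M → T ⊆ M → v (S ∪ T) ≤ v S + v T) (hS : S ⊆ M) :
    v M ≤ v S + v (M \ S) := by
  simpa only [Finset.union_sdiff_of_subset hS] using hsub S (M \ S) hS Finset.sdiff_subset

theorem CutFailed.lt_of_acceptable (hcut : CutFailed M v c) (hS : S ⊆ M)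
    (hacc : Acceptable M v c S) : v (M \ S) < c * v S := by
  by_contra! h
  refine hcut ⟨S, hS, hacc, ?_⟩
  rwa [Acceptable, Finset.sdiff_sdiff_eq_self hS]

theorem CMinimal.lt_of_mem (hmin : CMinimal M v c S) {g : ι} (hg : g ∈ S) :
    v (S \ {g}) < c * v (M \ S ∪ {g}) := by
  have h := hmin.2.2 g hg
  rwa [Acceptable, not_le,
    Finset.sdiff_sdiff_eq_sdiff_union (Finset.singleton_subset_iff.2 (hmin.1 hg))] at h

end Bundles

theorem minimal_marginal_value_general {ι : Type*} [DecidableEq ι] (M : Finset ι)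
    (v : Finset ι → ℝ)
    (hsub : ∀ S T : Finset ι, S ⊆ M → T ⊆ M → v (S ∪ T) ≤ v S + v T)
    (hM : v M = 1) (c : ℝ) (hc0 : 0 ≤ c) (hc1 : c < 1)
    (hcut : CutFailed M v c)
    (S : Finset ι) (hmin : CMinimal M v c S) :
    ∀ g ∈ S,
      max (v S - v (S \ {g})) (v ((M \ S) ∪ {g}) - v (M \ S)) ≥ (1 - c) / 2 := by
  intro g hg
  by_contra! hlt
  obtain ⟨hmarg_S, hmarg_T⟩ := max_lt_iff.1 hlt
  have hS := hmin.1
  have hcompl : v (M \ S) < c * v S := hcut.lt_of_acceptable hS hmin.2.1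
  have hdrop : v (S \ {g}) < c * v (M \ S ∪ {g}) := hmin.lt_of_mem hg
  have hsplit : 1 ≤ v S + v (M \ S) := hM ▸ le_add_sdiff_of_subadditive hsub hS
  have hsplit' : 1 ≤ v (S \ {g}) + v (M \ S ∪ {g}) := by
    have h := le_add_sdiff_of_subadditive hsub (S := S \ {g}) (Finset.sdiff_subset.trans hS)
    rwa [hM, Finset.sdiff_sdiff_eq_sdiff_union
      (Finset.singleton_subset_iff.2 (hS hg))] at h
  have hpos : 0 < v S := by nlinarith
  have hhalf : v S < 1 / 2 := by
    have : v S - (1 - c) / 2 < c * (c * v S + (1 - c) / 2) := by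
      calc v S - (1 - c) / 2 < v (S \ {g}) := by linarith
        _ < c * v (M \ S ∪ {g}) := hdrop
        _ ≤ c * (v (M \ S) + (1 - c) / 2) := by gcongr; linarith
        _ ≤ c * (c * v S + (1 - c) / 2) := by gcongr
    nlinarith
  nlinarith

/-- For a subadditive valuation with `v M = 1` and `c ∈ [0,1)`, under the cut-failed
condition, every item `g` of a `c`-minimal bundle `S` satisfies
`max (v S - v (S \ {g})) (v ((M \ S) ∪ {g}) - v (M \ S)) ≥ (1 - c) / 2`. -/
theorem minimal_marginal_value {ι : Type*} [DecidableEq ι] (M : Finset ι)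
    (v : Finset ι → ℝ) (h0 : v ∅ = 0)
    (hsub : ∀ S T : Finset ι, S ⊆ M → T ⊆ M → v (S ∪ T) ≤ v S + v T)
    (hM : v M = 1) (c : ℝ) (hc0 : 0 ≤ c) (hc1 : c < 1)
    (hcut : CutFailed M v c)
    (S : Finset ι) (hmin : CMinimal M v c S) :
    ∀ g ∈ S,
      max (v S - v (S \ {g})) (v ((M \ S) ∪ {g}) - v (M \ S)) ≥ (1 - c) / 2 :=
  minimal_marginal_value_general M v hsub hM c hc0 hc1 hcut S hmin
end

section
/- Let v be a monotone valuation on a finite set M of items and let c ∈ [0, 1] be a real number. Assume the cut-failed condition holds. If S and T are c-minimal bundles, g ∈ S, and T ⊆ (M\S) ∪ {g}, then g ∈ T. -/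
theorem Acceptable.sdiff_of_disjoint {ι : Type*} [DecidableEq ι] {M : Finset ι}
    {v : Finset ι → ℝ} (hmono : ∀ S T : Finset ι, S ⊆ T → T ⊆ M → v S ≤ v T)
    {c : ℝ} (hc0 : 0 ≤ c) {S T : Finset ι} (hSM : S ⊆ M) (hS : Acceptable M v c S)
    (hTM : T ⊆ M) (hST : Disjoint S T) : Acceptable M v c (M \ T) := by
  have hTS : T ⊆ M \ S := Finset.subset_sdiff.2 ⟨hTM, hST.symm⟩
  have hST' : S ⊆ M \ T := Finset.subset_sdiff.2 ⟨hSM, hST⟩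
  unfold Acceptable
  rw [Finset.sdiff_sdiff_eq_self hTM]
  calc c * v T ≤ c * v (M \ S) :=
        mul_le_mul_of_nonneg_left (hmono _ _ hTS Finset.sdiff_subset) hc0
    _ ≤ v S := hS
    _ ≤ v (M \ T) := hmono _ _ hST' Finset.sdiff_subset

theorem g_mem_T_general {ι : Type*} [DecidableEq ι] (M : Finset ι)
    (v : Finset ι → ℝ)
    (hmono : ∀ S T : Finset ι, S ⊆ T → T ⊆ M → v S ≤ v T)
    (c : ℝ) (hc0 : 0 ≤ c)
    (hcut : CutFailed M v c)
    (S T : Finset ι) (hS : CMinimal M v c S) (hT : CMinimal M v c T)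
    (g : ι) (hsub : T ⊆ (M \ S) ∪ {g}) :
    g ∈ T := by
  by_contra hgT
  have hST : Disjoint S T := by
    rw [Finset.disjoint_right]
    intro x hxT hxS
    rcases Finset.mem_union.1 (hsub hxT) with hx | hx
    · exact (Finset.mem_sdiff.1 hx).2 hxS
    · exact hgT (Finset.mem_singleton.1 hx ▸ hxT)
  exact hcut ⟨T, hT.1, hT.2.1, hS.2.1.sdiff_of_disjoint hmono hc0 hS.1 hT.1 hST⟩

/-- For a monotone valuation and `c ∈ [0,1]`, under the cut-failed condition, if `S`
and `T` are `c`-minimal, `g ∈ S` and `T ⊆ (M \ S) ∪ {g}`, then `g ∈ T`. -/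
theorem g_mem_T {ι : Type*} [DecidableEq ι] (M : Finset ι)
    (v : Finset ι → ℝ) (h0 : v ∅ = 0)
    (hmono : ∀ S T : Finset ι, S ⊆ T → T ⊆ M → v S ≤ v T)
    (c : ℝ) (hc0 : 0 ≤ c) (hc1 : c ≤ 1)
    (hcut : CutFailed M v c)
    (S T : Finset ι) (hS : CMinimal M v c S) (hT : CMinimal M v c T)
    (g : ι) (hg : g ∈ S) (hsub : T ⊆ (M \ S) ∪ {g}) :
    g ∈ T :=
  g_mem_T_general M v hmono c hc0 hcut S T hS hT g hsub
end

section
/- Let v be a monotone valuation on a finite set M of items and let c ∈ [0, 1] be a real number. Assume the cut-failed condition holds. If S and T are c-minimal bundles and g₁, g₂ ∈ S satisfy T ⊆ (M\S) ∪ {g₁} and T ⊆ (M\S) ∪ {g₂}, then g₁ = g₂. -/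
theorem Finset.subset_of_subset_union_singleton_of_ne {α : Type*} [DecidableEq α]
    {s t : Finset α} {a b : α} (ha : t ⊆ s ∪ {a}) (hb : t ⊆ s ∪ {b}) (hab : a ≠ b) :
    t ⊆ s := by
  have hinter : (s ∪ {a}) ∩ (s ∪ {b}) = s := by
    rw [← Finset.union_inter_distrib_left,
      Finset.disjoint_iff_inter_eq_empty.1 (Finset.disjoint_singleton.2 hab), Finset.union_empty]
  exact hinter ▸ Finset.subset_inter ha hb

theorem Acceptable.compl_of_subset_compl {ι : Type*} [DecidableEq ι] {M : Finset ι}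
    {v : Finset ι → ℝ} (hmono : ∀ S T : Finset ι, S ⊆ T → T ⊆ M → v S ≤ v T)
    {c : ℝ} (hc0 : 0 ≤ c) {S T : Finset ι} (hSM : S ⊆ M) (hS : Acceptable M v c S)
    (hTS : T ⊆ M \ S) : Acceptable M v c (M \ T) := by
  have hST : S ⊆ M \ T :=
    Finset.subset_sdiff.2 ⟨hSM, (Finset.subset_sdiff.1 hTS).2.symm⟩
  have hMT : M ∩ T ⊆ M \ S := Finset.inter_subset_right.trans hTS
  unfold Acceptable at hS ⊢
  rw [Finset.sdiff_sdiff_self_left]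
  calc c * v (M ∩ T) ≤ c * v (M \ S) :=
        mul_le_mul_of_nonneg_left (hmono _ _ hMT Finset.sdiff_subset) hc0
    _ ≤ v S := hS
    _ ≤ v (M \ T) := hmono _ _ hST Finset.sdiff_subset

theorem g_unique_general {ι : Type*} [DecidableEq ι] (M : Finset ι)
    (v : Finset ι → ℝ)
    (hmono : ∀ S T : Finset ι, S ⊆ T → T ⊆ M → v S ≤ v T)
    (c : ℝ) (hc0 : 0 ≤ c)
    (hcut : CutFailed M v c)
    (S T : Finset ι) (hS : CMinimal M v c S) (hT : CMinimal M v c T)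
    (g₁ g₂ : ι)
    (hsub₁ : T ⊆ (M \ S) ∪ {g₁}) (hsub₂ : T ⊆ (M \ S) ∪ {g₂}) :
    g₁ = g₂ := by
  by_contra hne
  have hTS : T ⊆ M \ S := Finset.subset_of_subset_union_singleton_of_ne hsub₁ hsub₂ hne
  exact hcut ⟨T, hT.1, hT.2.1, hS.2.1.compl_of_subset_compl hmono hc0 hS.1 hTS⟩

/-- For a monotone valuation and `c ∈ [0,1]`, under the cut-failed condition, if `S`
and `T` are `c`-minimal and `g₁, g₂ ∈ S` both satisfy `T ⊆ (M \ S) ∪ {gᵢ}`, then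
`g₁ = g₂`. -/
theorem g_unique {ι : Type*} [DecidableEq ι] (M : Finset ι)
    (v : Finset ι → ℝ) (h0 : v ∅ = 0)
    (hmono : ∀ S T : Finset ι, S ⊆ T → T ⊆ M → v S ≤ v T)
    (c : ℝ) (hc0 : 0 ≤ c) (hc1 : c ≤ 1)
    (hcut : CutFailed M v c)
    (S T : Finset ι) (hS : CMinimal M v c S) (hT : CMinimal M v c T)
    (g₁ g₂ : ι) (hg₁ : g₁ ∈ S) (hg₂ : g₂ ∈ S)
    (hsub₁ : T ⊆ (M \ S) ∪ {g₁}) (hsub₂ : T ⊆ (M \ S) ∪ {g₂}) :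
    g₁ = g₂ :=
  g_unique_general M v hmono c hc0 hcut S T hS hT g₁ g₂ hsub₁ hsub₂
end

section
/- Let v be a monotone valuation on a finite set M of items and let c ∈ [0, 1] be a real number. Assume the cut-failed condition holds, and let S be a c-minimal bundle. Then the number of c-minimal bundles T for which there exists g ∈ S with T ⊆ (M\S) ∪ {g} is at least |S|. -/
/-!
Removing any `g` from the minimal bundle `S` makes it unacceptable, so (as `c ≤ 1`) its
complement `(M \ S) ∪ {g}` is acceptable and contains a `c`-minimal bundle `T_g`. Cut failure
forces `g ∈ T_g`: otherwise `T_g ⊆ M \ S`, and `M \ T_g ⊇ S` would be acceptable as well. Since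
`T_g ∩ S = {g}`, the map `g ↦ T_g` is injective on `S`.
-/

section Acceptable

variable {ι : Type*} [DecidableEq ι] {M : Finset ι} {v : Finset ι → ℝ} {c : ℝ}

theorem Acceptable.mono (hmono : ∀ S T : Finset ι, S ⊆ T → T ⊆ M → v S ≤ v T) (hc0 : 0 ≤ c)
    {S T : Finset ι} (hS : Acceptable M v c S) (hST : S ⊆ T) (hTM : T ⊆ M) :
    Acceptable M v c T := by
  have hT : v S ≤ v T := hmono S T hST hTM
  have hcompl : v (M \ T) ≤ v (M \ S) := hmono _ _ (Finset.sdiff_subset_sdiff le_rfl hST) sdiff_le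
  unfold Acceptable at hS ⊢
  nlinarith

theorem acceptable_sdiff_of_not_acceptable (hc1 : c ≤ 1) {X : Finset ι} (hXM : X ⊆ M)
    (hX : 0 ≤ v X) (hMX : 0 ≤ v (M \ X)) (hnot : ¬ Acceptable M v c X) :
    Acceptable M v c (M \ X) := by
  unfold Acceptable at hnot ⊢
  rw [Finset.sdiff_sdiff_eq_self hXM]
  nlinarith

theorem exists_cMinimal_subset {X : Finset ι} (hXM : X ⊆ M) (hX : Acceptable M v c X) :
    ∃ T ⊆ X, CMinimal M v c T := by
  obtain ⟨T, hTX, hTmin⟩ := exists_minimal_le_of_wellFoundedLT (Acceptable M v c) X hX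
  refine ⟨T, hTX, hTX.trans hXM, hTmin.prop, fun g hg hacc => ?_⟩
  have : g ∈ T \ {g} := hTmin.le_of_le hacc Finset.sdiff_subset hg
  simp at this

theorem CutFailed.not_acceptable_of_subset_sdiff
    (hmono : ∀ S T : Finset ι, S ⊆ T → T ⊆ M → v S ≤ v T) (hc0 : 0 ≤ c)
    (hcut : CutFailed M v c) {S T : Finset ι} (hSM : S ⊆ M) (hS : Acceptable M v c S)
    (hTS : T ⊆ M \ S) : ¬ Acceptable M v c T := by
  intro hT
  have hTM : T ⊆ M := hTS.trans sdiff_le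
  have hST : S ⊆ M \ T := Finset.subset_sdiff.2 ⟨hSM, (Finset.subset_sdiff.1 hTS).2.symm⟩
  exact hcut ⟨T, hTM, hT, hS.mono hmono hc0 hST sdiff_le⟩

theorem CMinimal.exists_cMinimal_mem_subset_sdiff_union (h0 : v ∅ = 0)
    (hmono : ∀ S T : Finset ι, S ⊆ T → T ⊆ M → v S ≤ v T) (hc0 : 0 ≤ c) (hc1 : c ≤ 1)
    (hcut : CutFailed M v c) {S : Finset ι} (hS : CMinimal M v c S) {g : ι} (hg : g ∈ S) :
    ∃ T, CMinimal M v c T ∧ g ∈ T ∧ T ⊆ (M \ S) ∪ {g} := by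
  obtain ⟨hSM, hSacc, hSmin⟩ := hS
  have hnonneg : ∀ T ⊆ M, 0 ≤ v T := fun T hT => h0 ▸ hmono ∅ T (Finset.empty_subset T) hT
  have hSgM : S \ {g} ⊆ M := Finset.sdiff_subset.trans hSM
  have hcompl : M \ (S \ {g}) = (M \ S) ∪ {g} := by
    rw [Finset.sdiff_sdiff_eq_sdiff_union (Finset.singleton_subset_iff.2 (hSM hg))]
  have hXacc : Acceptable M v c ((M \ S) ∪ {g}) := hcompl ▸
    acceptable_sdiff_of_not_acceptable hc1 hSgM (hnonneg _ hSgM) (hnonneg _ sdiff_le)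
      (hSmin g hg)
  obtain ⟨T, hTX, hT⟩ := exists_cMinimal_subset (hcompl ▸ sdiff_le) hXacc
  refine ⟨T, hT, ?_, hTX⟩
  by_contra hgT
  have hTMS : T ⊆ M \ S := fun x hx => by
    rcases Finset.mem_union.1 (hTX hx) with h | h
    · exact h
    · exact absurd (Finset.mem_singleton.1 h ▸ hx) hgT
  exact hcut.not_acceptable_of_subset_sdiff hmono hc0 hSM hSacc hTMS hT.2.1

end Acceptable

/-- For a monotone valuation and `c ∈ [0,1]`, under the cut-failed condition, the
number of `c`-minimal bundles `T` with `T ⊆ (M \ S) ∪ {g}` for some `g ∈ S` is at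
least `|S|`, for any `c`-minimal bundle `S`. -/
theorem graph_outdegree {ι : Type*} [DecidableEq ι] (M : Finset ι)
    (v : Finset ι → ℝ) (h0 : v ∅ = 0)
    (hmono : ∀ S T : Finset ι, S ⊆ T → T ⊆ M → v S ≤ v T)
    (c : ℝ) (hc0 : 0 ≤ c) (hc1 : c ≤ 1)
    (hcut : CutFailed M v c)
    (S : Finset ι) (hS : CMinimal M v c S) :
    S.card ≤
      {T : Finset ι | CMinimal M v c T ∧ ∃ g ∈ S, T ⊆ (M \ S) ∪ {g}}.ncard := by
  have key : ∀ g ∈ S, ∃ T, CMinimal M v c T ∧ g ∈ T ∧ T ⊆ (M \ S) ∪ {g} := fun g hg =>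
    hS.exists_cMinimal_mem_subset_sdiff_union h0 hmono hc0 hc1 hcut hg
  choose! f hf using key
  have hfinite : {T : Finset ι | CMinimal M v c T ∧ ∃ g ∈ S, T ⊆ (M \ S) ∪ {g}}.Finite :=
    (M.powerset.finite_toSet).subset fun T hT => Finset.mem_powerset.2 hT.1.1
  rw [← Set.ncard_coe_finset]
  refine Set.ncard_le_ncard_of_injOn f (fun g hg => ⟨(hf g hg).1, g, hg, (hf g hg).2.2⟩) ?_ hfinite
  intro g₁ hg₁ g₂ hg₂ heq
  have hmem : g₁ ∈ (M \ S) ∪ {g₂} := (hf g₂ hg₂).2.2 (heq ▸ (hf g₁ hg₁).2.1)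
  simpa [Finset.mem_coe.1 hg₁] using hmem
end

section
/- Let v be a monotone submodular valuation on a finite set M of m items with v(M) = 1, and let c ∈ [0, 1) be a real number. Assume the cut-failed condition holds. Then the number of c-minimal bundles is strictly less than 2·(m+1)^(8/(1−c)), where the exponentiation is real-valued. -/
/-!
Every `c`-minimal bundle `S` is determined by a pair of small "sketches" `P ⊆ S` and
`Q ⊆ M \ S` of size at most `2 / (1 - c)`: a largest `P ⊆ S` with `θ * #P ≤ v P`, where
`θ = (1 - c) / 2`, leaves every other item of `S` with marginal value below `θ` over `P`, and
likewise for `Q`. Under the cut-failed condition, removing any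
item `g` from a `c`-minimal bundle `S` and giving it to `M \ S` changes the two values by a
total of more than `1 - c`, so by submodularity an item of `S \ S'` would have marginal value
at least `θ` over `P` or over `Q`; hence `S` and `S'` with the same sketches coincide.
There are at most `(m + 1) ^ K` sets of size at most `K`, which gives the bound.
-/

open Finset

section

variable {ι : Type*} [DecidableEq ι]

def marginal (v : Finset ι → ℝ) (A : Finset ι) (g : ι) : ℝ :=
  v (A ∪ {g}) - v A

def IsSubmodularOn (M : Finset ι) (v : Finset ι → ℝ) : Prop :=
  ∀ S T : Finset ι, S ⊆ T → T ⊆ M → ∀ g ∈ M, marginal v T g ≤ marginal v S g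

theorem card_filter_card_le_le_pow (M : Finset ι) (K : ℕ) :
    #{A ∈ M.powerset | #A ≤ K} ≤ (#M + 1) ^ K := by
  calc #{A ∈ M.powerset | #A ≤ K}
      ≤ #((range (K + 1)).biUnion fun i => powersetCard i M) := card_le_card fun A hA => by
        simp only [mem_filter, mem_powerset] at hA
        simpa [mem_powersetCard, hA.1] using Nat.lt_succ_of_le hA.2
    _ ≤ ∑ i ∈ range (K + 1), (#M).choose i := by
        simpa only [card_powersetCard] using card_biUnion_le (s := range (K + 1))
          (t := fun i => powersetCard i M)
    _ ≤ ∑ i ∈ range (K + 1), #M ^ i * 1 ^ (K - i) * K.choose i := by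
        refine sum_le_sum fun i hi => ?_
        rw [one_pow, mul_one]
        exact (Nat.choose_le_pow _ _).trans
          (Nat.le_mul_of_pos_right _ (Nat.choose_pos (Nat.lt_succ_iff.mp (mem_range.mp hi))))
    _ = (#M + 1) ^ K := (add_pow _ _ _).symm

theorem IsSubmodularOn.le_add {M : Finset ι} {v : Finset ι → ℝ} (hsub : IsSubmodularOn M v)
    (h0 : v ∅ = 0) {A B : Finset ι} (hA : A ⊆ M) (hB : B ⊆ M) : v (A ∪ B) ≤ v A + v B := by
  induction B using Finset.induction_on with
  | empty => simp [h0]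
  | @insert b B _ ih =>
    have hBM : B ⊆ M := (subset_insert b B).trans hB
    have hstep := hsub B (A ∪ B) subset_union_right (union_subset hA hBM) b
      (hB (mem_insert_self b B))
    simp only [marginal, union_comm _ {b}, ← insert_eq] at hstep
    rw [union_insert]
    linarith [ih hBM]

/-- Take `P` of maximal cardinality among the `P ⊆ X` with `θ * #P ≤ v P`. -/
theorem exists_subset_forall_marginal_lt {v : Finset ι → ℝ} (h0 : 0 ≤ v ∅) (X : Finset ι)
    (θ : ℝ) : ∃ P ⊆ X, θ * #P ≤ v P ∧ ∀ g ∈ X \ P, marginal v P g < θ := by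
  obtain ⟨P, hP, hPmax⟩ := exists_max_image {P ∈ X.powerset | θ * #P ≤ v P} (#·)
    ⟨∅, by simpa using h0⟩
  rw [mem_filter, mem_powerset] at hP
  refine ⟨P, hP.1, hP.2, fun g hg => ?_⟩
  rw [mem_sdiff] at hg
  by_contra! hθ
  have hins : insert g P ∈ {P ∈ X.powerset | θ * #P ≤ v P} := by
    rw [mem_filter, mem_powerset, card_insert_of_notMem hg.2, insert_eq, union_comm]
    refine ⟨union_subset hP.1 (singleton_subset_iff.mpr hg.1), ?_⟩
    push_cast
    linarith [hP.2, show θ ≤ v (P ∪ {g}) - v P from hθ]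
  have := hPmax _ hins
  rw [card_insert_of_notMem hg.2] at this
  omega

theorem exists_subset_card_le_forall_marginal_lt {M : Finset ι} {v : Finset ι → ℝ}
    (h0 : v ∅ = 0) (hmono : ∀ S T : Finset ι, S ⊆ T → T ⊆ M → v S ≤ v T)
    {X : Finset ι} (hX : X ⊆ M) {θ : ℝ} (hθ : 0 < θ) :
    ∃ P ⊆ X, #P ≤ ⌊v M / θ⌋₊ ∧ ∀ g ∈ X \ P, marginal v P g < θ := by
  obtain ⟨P, hPX, hPv, hP⟩ := exists_subset_forall_marginal_lt h0.ge X θ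
  refine ⟨P, hPX, Nat.le_floor ?_, hP⟩
  rw [le_div_iff₀ hθ, mul_comm]
  exact hPv.trans (hmono P M (hPX.trans hX) subset_rfl)

theorem CMinimal.lt_of_cutFailed {M : Finset ι} {v : Finset ι → ℝ} {c : ℝ} {S : Finset ι}
    (hS : CMinimal M v c S) (hcut : CutFailed M v c) : v (M \ S) < c * v S := by
  have hcompl : ¬ Acceptable M v c (M \ S) := fun h => hcut ⟨S, hS.1, hS.2.1, h⟩
  rwa [Acceptable, Finset.sdiff_sdiff_eq_self hS.1, ge_iff_le, not_le] at hcompl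

theorem CMinimal.one_sub_lt_marginal_add_marginal {M : Finset ι} {v : Finset ι → ℝ} {c : ℝ}
    {S : Finset ι} (hS : CMinimal M v c S) (hcut : CutFailed M v c) (h0 : v ∅ = 0)
    (hmono : ∀ S T : Finset ι, S ⊆ T → T ⊆ M → v S ≤ v T) (hsub : IsSubmodularOn M v)
    (hM : v M = 1) (hc1 : c < 1) {g : ι} (hg : g ∈ S) :
    1 - c < marginal v (S \ {g}) g + marginal v (M \ S) g := by
  have hcompl : v (M \ S) < c * v S := hS.lt_of_cutFailed hcut
  obtain ⟨hSM, -, hmin⟩ := hS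
  have hgM : g ∈ M := hSM hg
  have hsplit : 1 ≤ v S + v (M \ S) := by
    rw [← hM]
    simpa only [union_sdiff_of_subset hSM] using hsub.le_add h0 hSM (sdiff_subset : M \ S ⊆ M)
  have hremove : v (S \ {g}) < c * v ((M \ S) ∪ {g}) := by
    have := hmin g hg
    rwa [Acceptable, sdiff_sdiff_eq_sdiff_union (singleton_subset_iff.mpr hgM), ge_iff_le,
      not_le] at this
  have hgain : 0 ≤ marginal v (M \ S) g :=
    sub_nonneg.mpr (hmono _ _ subset_union_left (union_subset sdiff_subset
      (singleton_subset_iff.mpr hgM)))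
  -- `v S - c * v (M \ S) ≥ (1 - c) + (c * v S - v (M \ S)) > 1 - c`
  have hslack : 0 ≤ (1 - c) * (v S + v (M \ S) - 1) := mul_nonneg (by linarith) (by linarith)
  have hgain' : 0 ≤ (1 - c) * marginal v (M \ S) g := mul_nonneg (by linarith) hgain
  rw [marginal, sdiff_union_of_subset (singleton_subset_iff.mpr hg)]
  unfold marginal at hgain' ⊢
  linarith

theorem CMinimal.subset_of_forall_marginal_lt {M : Finset ι} {v : Finset ι → ℝ} {c : ℝ}
    {S S' P Q : Finset ι} (hS : CMinimal M v c S) (hcut : CutFailed M v c) (h0 : v ∅ = 0)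
    (hmono : ∀ S T : Finset ι, S ⊆ T → T ⊆ M → v S ≤ v T) (hsub : IsSubmodularOn M v)
    (hM : v M = 1) (hc1 : c < 1) (hPS : P ⊆ S) (hPS' : P ⊆ S') (hQS : Q ⊆ M \ S)
    (hP : ∀ g ∈ S \ P, marginal v P g < (1 - c) / 2)
    (hQ : ∀ g ∈ (M \ S') \ Q, marginal v Q g < (1 - c) / 2) : S ⊆ S' := by
  intro g hgS
  by_contra hgS'
  have hgM : g ∈ M := hS.1 hgS
  have hgP : g ∉ P := fun h => hgS' (hPS' h)
  have hgQ : g ∉ Q := fun h => (mem_sdiff.mp (hQS h)).2 hgS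
  have hloss : marginal v (S \ {g}) g ≤ marginal v P g :=
    hsub _ _ (Finset.subset_sdiff.mpr ⟨hPS, disjoint_singleton_right.mpr hgP⟩)
      (sdiff_subset.trans hS.1) g hgM
  have hgain : marginal v (M \ S) g ≤ marginal v Q g := hsub _ _ hQS sdiff_subset g hgM
  have := hS.one_sub_lt_marginal_add_marginal hcut h0 hmono hsub hM hc1 hgS
  linarith [hP g (mem_sdiff.mpr ⟨hgS, hgP⟩), hQ g (mem_sdiff.mpr ⟨mem_sdiff.mpr ⟨hgM, hgS'⟩, hgQ⟩)]

theorem ncard_cMinimal_le {M : Finset ι} {v : Finset ι → ℝ} {c : ℝ} (hcut : CutFailed M v c)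
    (h0 : v ∅ = 0) (hmono : ∀ S T : Finset ι, S ⊆ T → T ⊆ M → v S ≤ v T)
    (hsub : IsSubmodularOn M v) (hM : v M = 1) (hc1 : c < 1) :
    {S | CMinimal M v c S}.ncard ≤ (#M + 1) ^ (2 * ⌊2 / (1 - c)⌋₊) := by
  set K := ⌊2 / (1 - c)⌋₊
  set small := {A ∈ M.powerset | #A ≤ K}
  have hθ : 0 < (1 - c) / 2 := by linarith
  have hK : ⌊v M / ((1 - c) / 2)⌋₊ = K := by rw [hM, one_div_div]
  have hsketch : ∀ S ∈ {S | CMinimal M v c S}, ∃ PQ ∈ small ×ˢ small,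
      PQ.1 ⊆ S ∧ PQ.2 ⊆ M \ S ∧ (∀ g ∈ S \ PQ.1, marginal v PQ.1 g < (1 - c) / 2) ∧
        ∀ g ∈ (M \ S) \ PQ.2, marginal v PQ.2 g < (1 - c) / 2 := by
    intro S hS
    obtain ⟨P, hPS, hPcard, hP⟩ := exists_subset_card_le_forall_marginal_lt h0 hmono hS.1 hθ
    obtain ⟨Q, hQS, hQcard, hQ⟩ :=
      exists_subset_card_le_forall_marginal_lt h0 hmono (sdiff_subset : M \ S ⊆ M) hθ
    rw [hK] at hPcard hQcard
    refine ⟨(P, Q), mem_product.mpr ⟨?_, ?_⟩, hPS, hQS, hP, hQ⟩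
    · exact mem_filter.mpr ⟨mem_powerset.mpr (hPS.trans hS.1), hPcard⟩
    · exact mem_filter.mpr ⟨mem_powerset.mpr (hQS.trans sdiff_subset), hQcard⟩
  choose! sketch hmem hfst hsnd hP hQ using hsketch
  have hsubset : ∀ S ∈ {S | CMinimal M v c S}, ∀ S' ∈ {S | CMinimal M v c S},
      sketch S = sketch S' → S ⊆ S' := fun S hS S' hS' h =>
    hS.subset_of_forall_marginal_lt hcut h0 hmono hsub hM hc1 (hfst S hS)
      (h ▸ hfst S' hS') (hsnd S hS) (hP S hS) (h ▸ hQ S' hS')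
  calc {S | CMinimal M v c S}.ncard ≤ (↑(small ×ˢ small) : Set _).ncard :=
        Set.ncard_le_ncard_of_injOn sketch hmem fun S hS S' hS' h =>
          (hsubset S hS S' hS' h).antisymm (hsubset S' hS' S hS h.symm)
    _ = #small * #small := by rw [Set.ncard_coe_finset, card_product]
    _ ≤ (#M + 1) ^ K * (#M + 1) ^ K :=
        Nat.mul_le_mul (card_filter_card_le_le_pow M K) (card_filter_card_le_le_pow M K)
    _ = (#M + 1) ^ (2 * K) := by ring

end

theorem minimal_bundle_count_general {ι : Type*} [DecidableEq ι] (M : Finset ι)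
    (v : Finset ι → ℝ) (h0 : v ∅ = 0)
    (hmono : ∀ S T : Finset ι, S ⊆ T → T ⊆ M → v S ≤ v T)
    (hsubmod : ∀ S T : Finset ι, S ⊆ T → T ⊆ M → ∀ g ∈ M,
      v (T ∪ {g}) - v T ≤ v (S ∪ {g}) - v S)
    (hM : v M = 1) (c : ℝ) (hc1 : c < 1)
    (hcut : CutFailed M v c) :
    ({S : Finset ι | CMinimal M v c S}.ncard : ℝ) <
      2 * ((M.card : ℝ) + 1) ^ ((8 : ℝ) / (1 - c)) := by
  set K := ⌊2 / (1 - c)⌋₊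
  have hc : 0 < 1 - c := sub_pos.mpr hc1
  have hexp : ((2 * K : ℕ) : ℝ) ≤ 8 / (1 - c) := by
    have hK : (K : ℝ) ≤ 2 / (1 - c) := Nat.floor_le (by positivity)
    rw [show (8 : ℝ) / (1 - c) = 4 * (2 / (1 - c)) by ring]
    push_cast
    linarith [(by positivity : (0 : ℝ) ≤ 2 / (1 - c))]
  calc ({S | CMinimal M v c S}.ncard : ℝ) ≤ ((M.card : ℝ) + 1) ^ ((2 * K : ℕ) : ℝ) := by
        rw [Real.rpow_natCast]
        exact_mod_cast ncard_cMinimal_le hcut h0 hmono hsubmod hM hc1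
    _ ≤ ((M.card : ℝ) + 1) ^ ((8 : ℝ) / (1 - c)) :=
        Real.rpow_le_rpow_of_exponent_le (by simp) hexp
    _ < 2 * ((M.card : ℝ) + 1) ^ ((8 : ℝ) / (1 - c)) := lt_two_mul_self (by positivity)

/-- For a monotone submodular valuation on `m` items with `v M = 1` and `c ∈ [0,1)`,
under the cut-failed condition, the number of `c`-minimal bundles is strictly less
than `2 * (m + 1) ^ (8 / (1 - c))` (real exponentiation). -/
theorem minimal_bundle_count {ι : Type*} [DecidableEq ι] (M : Finset ι)
    (v : Finset ι → ℝ) (h0 : v ∅ = 0)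
    (hmono : ∀ S T : Finset ι, S ⊆ T → T ⊆ M → v S ≤ v T)
    (hsubmod : ∀ S T : Finset ι, S ⊆ T → T ⊆ M → ∀ g ∈ M,
      v (T ∪ {g}) - v T ≤ v (S ∪ {g}) - v S)
    (hM : v M = 1) (c : ℝ) (hc0 : 0 ≤ c) (hc1 : c < 1)
    (hcut : CutFailed M v c) :
    ({S : Finset ι | CMinimal M v c S}.ncard : ℝ) <
      2 * ((M.card : ℝ) + 1) ^ ((8 : ℝ) / (1 - c)) :=
  minimal_bundle_count_general M v h0 hmono hsubmod hM c hc1 hcut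
end

section
/- Let v be a subadditive valuation on a finite set M of items, let α be a real number with 0 < α ≤ 1/2, and let S be a nonempty subset of M such that α·v(S) > v(M\S) and, for every g ∈ S, α·v((M\S) ∪ {g}) > v(S\{g}). Then for every g ∈ S, v({g}) ≥ α·v(M\{g}). -/
/-! With `a = v (M \ S)`, `b = v (S \ {g})`, `c = v {g}`, subadditivity turns the two hypotheses
into `a < α (b + c)` and `b < α (a + c)`. Eliminating `b` gives `(1 - α) a < α c`, and feeding this
back shows `α (a + b) < c`, using `2 α² ≤ 1 - α` for `α ≤ 1/2`; finally `v (M \ {g}) ≤ a + b`. -/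

open Finset

def SubadditiveOn {ι : Type*} [DecidableEq ι] (M : Finset ι) (v : Finset ι → ℝ) : Prop :=
  ∀ S T : Finset ι, S ⊆ M → T ⊆ M → v (S ∪ T) ≤ v S + v T

namespace SubadditiveOn

variable {ι : Type*} [DecidableEq ι] {M S : Finset ι} {v : Finset ι → ℝ} {g : ι}

theorem nonneg (hv : SubadditiveOn M v) {T : Finset ι} (hT : T ⊆ M) : 0 ≤ v T := by
  have := hv T T hT hT
  rw [union_self] at this
  linarith

theorem le_sdiff_singleton_add (hv : SubadditiveOn M v) (hS : S ⊆ M) (hg : g ∈ S) :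
    v S ≤ v (S \ {g}) + v {g} := by
  have := hv (S \ {g}) {g} (sdiff_subset.trans hS) (singleton_subset_iff.mpr (hS hg))
  rwa [sdiff_union_of_subset (singleton_subset_iff.mpr hg)] at this

theorem sdiff_singleton_le (hv : SubadditiveOn M v) (hS : S ⊆ M) (hg : g ∈ S) :
    v (M \ {g}) ≤ v (M \ S) + v (S \ {g}) := by
  have := hv (M \ S) (S \ {g}) sdiff_subset (sdiff_subset.trans hS)
  rwa [sdiff_union_sdiff_cancel hS (singleton_subset_iff.mpr hg)] at this

end SubadditiveOn

theorem mul_one_sub_lt_of_lt_mul {α a b c s : ℝ} (hα0 : 0 < α) (hα1 : α < 1)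
    (ha : a < α * s) (hs : s ≤ b + c) (hb : b < α * (a + c)) : a * (1 - α) < α * c := by
  have : a * (1 - α) * (1 + α) < α * c * (1 + α) := by
    nlinarith [mul_le_mul_of_nonneg_left hs hα0.le, mul_lt_mul_of_pos_left hb hα0]
  exact lt_of_mul_lt_mul_right this (by linarith)

theorem mul_add_lt_of_mul_one_sub_lt {α a b c : ℝ} (hα0 : 0 < α) (hα1 : α ≤ 1 / 2) (hc : 0 ≤ c)
    (ha : a * (1 - α) < α * c) (hb : b < α * (a + c)) : α * (a + b) < c := by
  have hα1' : 0 < 1 - α := by linarith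
  have hquad : 2 * α ^ 2 ≤ 1 - α := by nlinarith
  refine lt_of_mul_lt_mul_left ?_ hα1'.le
  calc (1 - α) * (α * (a + b))
      < (1 - α) * (α * a + α * (α * (a + c))) := by
        have := mul_lt_mul_of_pos_left hb hα0
        gcongr; linarith
    _ = α * (1 + α) * (a * (1 - α)) + α ^ 2 * (1 - α) * c := by ring
    _ < α * (1 + α) * (α * c) + α ^ 2 * (1 - α) * c := by gcongr
    _ = 2 * α ^ 2 * c := by ring
    _ ≤ (1 - α) * c := by gcongr

theorem single_item_dominates_general {ι : Type*} [DecidableEq ι] (M : Finset ι)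
    (v : Finset ι → ℝ)
    (hsub : ∀ S T : Finset ι, S ⊆ M → T ⊆ M → v (S ∪ T) ≤ v S + v T)
    (α : ℝ) (hα0 : 0 < α) (hα1 : α ≤ 1 / 2)
    (S : Finset ι) (hS : S ⊆ M)
    (h1 : α * v S > v (M \ S))
    (h2 : ∀ g ∈ S, α * v ((M \ S) ∪ {g}) > v (S \ {g})) :
    ∀ g ∈ S, v {g} ≥ α * v (M \ {g}) := by
  intro g hg
  have hv : SubadditiveOn M v := hsub
  have hgM : {g} ⊆ M := singleton_subset_iff.mpr (hS hg)
  have hb : v (S \ {g}) < α * (v (M \ S) + v {g}) :=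
    (h2 g hg).trans_le (mul_le_mul_of_nonneg_left (hv _ _ sdiff_subset hgM) hα0.le)
  have ha := mul_one_sub_lt_of_lt_mul hα0 (by linarith) h1
    (hv.le_sdiff_singleton_add hS hg) hb
  calc α * v (M \ {g}) ≤ α * (v (M \ S) + v (S \ {g})) :=
        mul_le_mul_of_nonneg_left (hv.sdiff_singleton_le hS hg) hα0.le
    _ ≤ v {g} := (mul_add_lt_of_mul_one_sub_lt hα0 hα1 (hv.nonneg hgM) ha hb).le

/-- For a subadditive valuation `v` on `M`, `0 < α ≤ 1/2`, and a nonempty `S ⊆ M`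
with `α * v S > v (M \ S)` and `α * v ((M \ S) ∪ {g}) > v (S \ {g})` for every
`g ∈ S`, every `g ∈ S` satisfies `v {g} ≥ α * v (M \ {g})`. -/
theorem single_item_dominates {ι : Type*} [DecidableEq ι] (M : Finset ι)
    (v : Finset ι → ℝ) (h0 : v ∅ = 0)
    (hsub : ∀ S T : Finset ι, S ⊆ M → T ⊆ M → v (S ∪ T) ≤ v S + v T)
    (α : ℝ) (hα0 : 0 < α) (hα1 : α ≤ 1 / 2)
    (S : Finset ι) (hS : S ⊆ M) (hne : S.Nonempty)
    (h1 : α * v S > v (M \ S))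
    (h2 : ∀ g ∈ S, α * v ((M \ S) ∪ {g}) > v (S \ {g})) :
    ∀ g ∈ S, v {g} ≥ α * v (M \ {g}) :=
  single_item_dominates_general M v hsub α hα0 hα1 S hS h1 h2
end

section
/- Let k ≥ 1, let M be a finite set of 2k items, and let w be a Boolean-valued function on subsets of M such that w(A) ≠ w(M\A) whenever |A| = k. Define the valuation v on M by: v(S) = 3|S| if |S| < k; v(S) = 3k if |S| > k; and for |S| = k, v(S) = 3k if w(S) is true and v(S) = 3k − 1 if w(S) is false. Then v is submodular. -/
/-!
Adding an item to a set of size `s` raises `v` by exactly `3` while `s + 1 < k`, by `2` or `3`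
when `s + 1 = k`, by `0` or `1` when `s = k`, and by `0` beyond. These ranges are ordered, each
lying below all earlier ones, and a set function whose marginal gains are confined to such
cardinality-indexed ranges is submodular.
-/

namespace Finset

variable {ι : Type*} [DecidableEq ι]

theorem submodular_of_card_gain_bounds (M : Finset ι) (v : Finset ι → ℝ) (lo hi : ℕ → ℝ)
    (hlo : ∀ n, 0 ≤ lo n) (hhi_le_lo : ∀ m n, m < n → hi n ≤ lo m)
    (hgain : ∀ S ⊆ M, ∀ g ∈ M, g ∉ S →
      lo #S ≤ v (insert g S) - v S ∧ v (insert g S) - v S ≤ hi #S) :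
    ∀ S T : Finset ι, S ⊆ T → T ⊆ M → ∀ g ∈ M,
      v (T ∪ {g}) - v T ≤ v (S ∪ {g}) - v S := by
  intro S T hST hTM g hg
  have hSM : S ⊆ M := hST.trans hTM
  simp only [union_singleton]
  by_cases hgT : g ∈ T
  · rw [insert_eq_of_mem hgT, sub_self]
    by_cases hgS : g ∈ S
    · rw [insert_eq_of_mem hgS, sub_self]
    · exact (hlo _).trans (hgain S hSM g hg hgS).1
  · obtain rfl | hSsT := hST.eq_or_ssubset
    · exact le_rfl
    calc v (insert g T) - v T ≤ hi #T := (hgain T hTM g hg hgT).2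
      _ ≤ lo #S := hhi_le_lo _ _ (card_lt_card hSsT)
      _ ≤ v (insert g S) - v S := (hgain S hSM g hg fun h ↦ hgT (hST h)).1

end Finset

open Finset

def lowerBoundGainLo (k n : ℕ) : ℝ :=
  if n + 1 < k then 3 else if n + 1 = k then 2 else 0

def lowerBoundGainHi (k n : ℕ) : ℝ :=
  if n < k then 3 else if n = k then 1 else 0

theorem lowerBoundGainLo_nonneg (k n : ℕ) : 0 ≤ lowerBoundGainLo k n := by
  unfold lowerBoundGainLo
  split_ifs <;> norm_num

theorem lowerBoundGainHi_le_lowerBoundGainLo (k : ℕ) {m n : ℕ} (hmn : m < n) :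
    lowerBoundGainHi k n ≤ lowerBoundGainLo k m := by
  unfold lowerBoundGainHi lowerBoundGainLo
  split_ifs <;> first | omega | norm_num

theorem lowerBoundGain_mem {ι : Type*} [DecidableEq ι] (k : ℕ) (M : Finset ι)
    (w : Finset ι → Bool) (v : Finset ι → ℝ)
    (hv : ∀ S ⊆ M, v S =
      if S.card < k then 3 * (S.card : ℝ)
      else if k < S.card then 3 * (k : ℝ)
      else if w S then 3 * (k : ℝ)
      else 3 * (k : ℝ) - 1)
    {S : Finset ι} (hSM : S ⊆ M) {g : ι} (hg : g ∈ M) (hgS : g ∉ S) :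
    lowerBoundGainLo k #S ≤ v (insert g S) - v S ∧
      v (insert g S) - v S ≤ lowerBoundGainHi k #S := by
  rw [hv S hSM, hv _ (insert_subset hg hSM), card_insert_of_notMem hgS]
  unfold lowerBoundGainLo lowerBoundGainHi
  clear hv
  split_ifs <;> first | omega | (rify at *; constructor <;> linarith)

theorem lower_bound_valuation_submodular_general {ι : Type*} [DecidableEq ι]
    (k : ℕ) (M : Finset ι)
    (w : Finset ι → Bool)
    (v : Finset ι → ℝ)
    (hv : ∀ S ⊆ M, v S =
      if S.card < k then 3 * (S.card : ℝ)
      else if k < S.card then 3 * (k : ℝ)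
      else if w S then 3 * (k : ℝ)
      else 3 * (k : ℝ) - 1) :
    ∀ S T : Finset ι, S ⊆ T → T ⊆ M → ∀ g ∈ M,
      v (T ∪ {g}) - v T ≤ v (S ∪ {g}) - v S :=
  submodular_of_card_gain_bounds M v (lowerBoundGainLo k) (lowerBoundGainHi k)
    (lowerBoundGainLo_nonneg k) (fun _ _ ↦ lowerBoundGainHi_le_lowerBoundGainLo k)
    fun _ hSM _ hg hgS ↦ lowerBoundGain_mem k M w v hv hSM hg hgS

/-- The valuation used in the 1-EF lower bound for submodular valuations is
submodular. -/
theorem lower_bound_valuation_submodular {ι : Type*} [DecidableEq ι]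
    (k : ℕ) (hk : 1 ≤ k) (M : Finset ι) (hM : M.card = 2 * k)
    (w : Finset ι → Bool)
    (hw : ∀ A ⊆ M, A.card = k → w A ≠ w (M \ A))
    (v : Finset ι → ℝ)
    (hv : ∀ S ⊆ M, v S =
      if S.card < k then 3 * (S.card : ℝ)
      else if k < S.card then 3 * (k : ℝ)
      else if w S then 3 * (k : ℝ)
      else 3 * (k : ℝ) - 1) :
    ∀ S T : Finset ι, S ⊆ T → T ⊆ M → ∀ g ∈ M,
      v (T ∪ {g}) - v T ≤ v (S ∪ {g}) - v S :=
  lower_bound_valuation_submodular_general k M w v hv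
end

section
/- Let k ≥ 1, let M be a finite set of 2k items, and for i = 1, 2 let w_i be a Boolean-valued function on subsets of M such that w_i(A) ≠ w_i(M\A) whenever |A| = k. For i = 1, 2 define the valuation v_i on M by: v_i(S) = 3|S| if |S| < k; v_i(S) = 3k if |S| > k; and for |S| = k, v_i(S) = 3k if w_i(S) is true and v_i(S) = 3k − 1 if w_i(S) is false. Then there exists a subset A of M with v₁(A) ≥ v₁(M\A) and v₂(M\A) ≥ v₂(A) (i.e., an envy-free allocation of M to the two players) if and only if there exists a subset A of M with |A| = k, w₁(A) true, and w₂(M\A) true. -/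
/-!
A bundle of fewer than `k` items is worth at most `3k - 3` while a bundle of at least `k` items
is worth at least `3k - 1`, so in an envy-free allocation of `2k` items both bundles have exactly
`k` items. Between two `k`-bundles the valuation only records the bit `w`, and since `w` takes
different values on a `k`-bundle and its complement, player 1 is envy-free exactly when `w₁ A`
holds and player 2 exactly when `w₂ (M \ A)` holds.
-/

namespace EnvyFree

open Finset

variable {ι : Type*}

noncomputable def thresholdValuation (k : ℕ) (w : Finset ι → Bool) (S : Finset ι) : ℝ :=
  if S.card < k then 3 * (S.card : ℝ)
  else if k < S.card then 3 * (k : ℝ)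
  else if w S then 3 * (k : ℝ)
  else 3 * (k : ℝ) - 1

variable {k : ℕ} {w : Finset ι → Bool} {S T : Finset ι}

theorem thresholdValuation_le_of_card_lt (hS : S.card < k) :
    thresholdValuation k w S ≤ 3 * k - 3 := by
  have : (S.card : ℝ) + 1 ≤ k := by exact_mod_cast hS
  rw [thresholdValuation, if_pos hS]
  linarith

theorem sub_one_le_thresholdValuation_of_le_card (hS : k ≤ S.card) :
    3 * (k : ℝ) - 1 ≤ thresholdValuation k w S := by
  rw [thresholdValuation, if_neg hS.not_gt]
  split_ifs <;> linarith

theorem thresholdValuation_lt_of_card_lt_of_le_card (hS : S.card < k) (hT : k ≤ T.card) :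
    thresholdValuation k w S < thresholdValuation k w T := by
  linarith [thresholdValuation_le_of_card_lt (w := w) hS,
    sub_one_le_thresholdValuation_of_le_card (w := w) hT]

theorem thresholdValuation_le_iff_of_card_eq (hS : S.card = k) (hT : T.card = k) :
    thresholdValuation k w T ≤ thresholdValuation k w S ↔ (w T = true → w S = true) := by
  simp only [thresholdValuation, hS, hT, lt_irrefl, if_false]
  cases w S <;> cases w T <;> norm_num

theorem envyFree_iff_card_eq [DecidableEq ι] {M A : Finset ι} {w₁ w₂ : Finset ι → Bool}
    (hM : M.card = 2 * k) (hA : A ⊆ M) :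
    (thresholdValuation k w₁ (M \ A) ≤ thresholdValuation k w₁ A ∧
        thresholdValuation k w₂ A ≤ thresholdValuation k w₂ (M \ A)) ↔
      A.card = k ∧ (w₁ (M \ A) = true → w₁ A = true) ∧ (w₂ A = true → w₂ (M \ A) = true) := by
  have hcard : (M \ A).card + A.card = 2 * k := by rw [card_sdiff_add_card_eq_card hA, hM]
  rcases lt_trichotomy A.card k with hlt | heq | hgt
  · have := thresholdValuation_lt_of_card_lt_of_le_card (w := w₁) hlt (T := M \ A) (by omega)
    constructor
    · rintro ⟨h₁, -⟩
      linarith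
    · rintro ⟨h, -⟩
      omega
  · rw [thresholdValuation_le_iff_of_card_eq heq (by omega),
      thresholdValuation_le_iff_of_card_eq (by omega) heq]
    exact (and_iff_right heq).symm
  · have := thresholdValuation_lt_of_card_lt_of_le_card (w := w₂) (S := M \ A) (by omega) hgt.le
    constructor
    · rintro ⟨-, h₂⟩
      linarith
    · rintro ⟨h, -⟩
      omega

theorem _root_.Bool.imp_iff_of_ne {a b : Bool} (h : a ≠ b) : (b = true → a = true) ↔ a = true := by
  cases a <;> cases b <;> simp_all

end EnvyFree

open EnvyFree in
theorem ef_exists_iff_general {ι : Type*} [DecidableEq ι]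
    (k : ℕ) (M : Finset ι) (hM : M.card = 2 * k)
    (w₁ w₂ : Finset ι → Bool)
    (hw₁ : ∀ A ⊆ M, A.card = k → w₁ A ≠ w₁ (M \ A))
    (hw₂ : ∀ A ⊆ M, A.card = k → w₂ A ≠ w₂ (M \ A))
    (v₁ v₂ : Finset ι → ℝ)
    (hv₁ : ∀ S ⊆ M, v₁ S =
      if S.card < k then 3 * (S.card : ℝ)
      else if k < S.card then 3 * (k : ℝ)
      else if w₁ S then 3 * (k : ℝ)
      else 3 * (k : ℝ) - 1)
    (hv₂ : ∀ S ⊆ M, v₂ S =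
      if S.card < k then 3 * (S.card : ℝ)
      else if k < S.card then 3 * (k : ℝ)
      else if w₂ S then 3 * (k : ℝ)
      else 3 * (k : ℝ) - 1) :
    (∃ A ⊆ M, v₁ A ≥ v₁ (M \ A) ∧ v₂ (M \ A) ≥ v₂ A) ↔
      (∃ A ⊆ M, A.card = k ∧ w₁ A = true ∧ w₂ (M \ A) = true) := by
  refine exists_congr fun A => and_congr_right fun hA => ?_
  have hA' : M \ A ⊆ M := Finset.sdiff_subset
  rw [hv₁ A hA, hv₁ _ hA', hv₂ A hA, hv₂ _ hA', ge_iff_le, ge_iff_le]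
  refine (envyFree_iff_card_eq hM hA).trans (and_congr_right fun hcard => ?_)
  rw [Bool.imp_iff_of_ne (hw₁ A hA hcard), Bool.imp_iff_of_ne (hw₂ A hA hcard).symm]

/-- For the valuations used in the 1-EF lower bound for submodular valuations, an
envy-free allocation exists iff there is a size-`k` bundle `A` with `w₁ A` and
`w₂ (M \ A)` both true. -/
theorem ef_exists_iff {ι : Type*} [DecidableEq ι]
    (k : ℕ) (hk : 1 ≤ k) (M : Finset ι) (hM : M.card = 2 * k)
    (w₁ w₂ : Finset ι → Bool)
    (hw₁ : ∀ A ⊆ M, A.card = k → w₁ A ≠ w₁ (M \ A))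
    (hw₂ : ∀ A ⊆ M, A.card = k → w₂ A ≠ w₂ (M \ A))
    (v₁ v₂ : Finset ι → ℝ)
    (hv₁ : ∀ S ⊆ M, v₁ S =
      if S.card < k then 3 * (S.card : ℝ)
      else if k < S.card then 3 * (k : ℝ)
      else if w₁ S then 3 * (k : ℝ)
      else 3 * (k : ℝ) - 1)
    (hv₂ : ∀ S ⊆ M, v₂ S =
      if S.card < k then 3 * (S.card : ℝ)
      else if k < S.card then 3 * (k : ℝ)
      else if w₂ S then 3 * (k : ℝ)
      else 3 * (k : ℝ) - 1) :
    (∃ A ⊆ M, v₁ A ≥ v₁ (M \ A) ∧ v₂ (M \ A) ≥ v₂ A) ↔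
      (∃ A ⊆ M, A.card = k ∧ w₁ A = true ∧ w₂ (M \ A) = true) :=
  ef_exists_iff_general k M hM w₁ w₂ hw₁ hw₂ v₁ v₂ hv₁ hv₂
end

section
/- Let k ≥ 1, let M be a finite set of 2k items, let c be a real number with 0 < c ≤ 1, and for i = 1, 2 let w_i be any Boolean-valued function on subsets of M. For i = 1, 2 define the valuation v_i on M by: v_i(S) = 0 if |S| < k; v_i(S) = 1 if |S| > k; and for |S| = k, v_i(S) = 1 if w_i(S) is true and v_i(S) = 0 if w_i(S) is false. Then there exists a subset A of M with v₁(A) ≥ (c/2)·v₁(M) and v₂(M\A) ≥ (c/2)·v₂(M) (i.e., a c-proportional allocation for the two players) if and only if there exists a subset A of M with |A| = k, w₁(A) true, and w₂(M\A) true. -/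
/-! The valuation of the full bundle is `1` and each player's value of a bundle is at least
`c / 2 ∈ (0, 1/2]` exactly when the bundle has more than `k` items, or exactly `k` items
accepted by `wᵢ`. Since `A` and `M \ A` have `2k` items together, both conditions together force
`|A| = |M \ A| = k`. -/

namespace Finset

variable {ι : Type*}

def thresholdValuation (k : ℕ) (w : Finset ι → Bool) (S : Finset ι) : ℝ :=
  if S.card < k then 0
  else if k < S.card then 1
  else if w S then 1
  else 0

theorem thresholdValuation_of_lt {k : ℕ} {S : Finset ι} (w : Finset ι → Bool)
    (h : k < S.card) : thresholdValuation k w S = 1 := by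
  simp [thresholdValuation, h, h.not_gt]

theorem le_thresholdValuation_iff {k : ℕ} {w : Finset ι → Bool} {S : Finset ι} {ε : ℝ}
    (h0 : 0 < ε) (h1 : ε ≤ 1) :
    ε ≤ thresholdValuation k w S ↔ k < S.card ∨ (S.card = k ∧ w S = true) := by
  unfold thresholdValuation
  split_ifs <;> grind

end Finset

/-- For the valuations used in the c-Prop lower bound for general valuations, a
c-proportional allocation exists iff there is a size-`k` bundle `A` with `w₁ A` and
`w₂ (M \ A)` both true. -/
theorem cprop_exists_iff {ι : Type*} [DecidableEq ι]
    (k : ℕ) (hk : 1 ≤ k) (M : Finset ι) (hM : M.card = 2 * k)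
    (c : ℝ) (hc0 : 0 < c) (hc1 : c ≤ 1)
    (w₁ w₂ : Finset ι → Bool)
    (v₁ v₂ : Finset ι → ℝ)
    (hv₁ : ∀ S ⊆ M, v₁ S =
      if S.card < k then 0
      else if k < S.card then 1
      else if w₁ S then 1
      else 0)
    (hv₂ : ∀ S ⊆ M, v₂ S =
      if S.card < k then 0
      else if k < S.card then 1
      else if w₂ S then 1
      else 0) :
    (∃ A ⊆ M, v₁ A ≥ (c / 2) * v₁ M ∧ v₂ (M \ A) ≥ (c / 2) * v₂ M) ↔
      (∃ A ⊆ M, A.card = k ∧ w₁ A = true ∧ w₂ (M \ A) = true) := by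
  replace hv₁ : ∀ S ⊆ M, v₁ S = Finset.thresholdValuation k w₁ S := hv₁
  replace hv₂ : ∀ S ⊆ M, v₂ S = Finset.thresholdValuation k w₂ S := hv₂
  have hkM : k < M.card := by omega
  have hv₁M : v₁ M = 1 := by rw [hv₁ M subset_rfl, Finset.thresholdValuation_of_lt w₁ hkM]
  have hv₂M : v₂ M = 1 := by rw [hv₂ M subset_rfl, Finset.thresholdValuation_of_lt w₂ hkM]
  refine exists_congr fun A => and_congr_right fun hA => ?_
  have hcard : (M \ A).card + A.card = 2 * k := hM ▸ Finset.card_sdiff_add_card_eq_card hA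
  rw [hv₁ A hA, hv₂ _ Finset.sdiff_subset, hv₁M, hv₂M, mul_one, ge_iff_le, ge_iff_le,
    Finset.le_thresholdValuation_iff (by linarith) (by linarith),
    Finset.le_thresholdValuation_iff (by linarith) (by linarith)]
  grind
end

section
/- Let k ≥ 1, let M be a finite set of 2k items, let c be a real number with 0 < c ≤ 1, and for i = 1, 2 let w_i be a Boolean-valued function on subsets of M such that w_i(A) ≠ w_i(M\A) whenever |A| = k. For i = 1, 2 define the valuation v_i on M by: v_i(S) = 0 if |S| < k; v_i(S) = 1 if |S| > k; and for |S| = k, v_i(S) = 1 if w_i(S) is true and v_i(S) = 0 if w_i(S) is false. Then there exists a subset A of M with v₁(A) ≥ c·v₁(M\A) and v₂(M\A) ≥ c·v₂(A) (i.e., a c-envy-free allocation for the two players) if and only if there exists a subset A of M with |A| = k, w₁(A) true, and w₂(M\A) true. -/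
namespace CEnvyFree

variable {ι : Type*} [DecidableEq ι] {k : ℕ} {M : Finset ι} {w : Finset ι → Bool}
  {v : Finset ι → ℝ}

/-- Since `v` is `{0, 1}`-valued and `c > 0`, the `c`-envy-freeness condition for one player only
asks that the player's bundle be worth `1` whenever the other bundle is. -/
theorem mul_val_compl_le_val_iff (hM : M.card = 2 * k) {c : ℝ} (hc : 0 < c)
    (hw : ∀ A ⊆ M, A.card = k → w A ≠ w (M \ A))
    (hv : ∀ S ⊆ M, v S =
      if S.card < k then 0
      else if k < S.card then 1
      else if w S then 1
      else 0)
    {A : Finset ι} (hA : A ⊆ M) :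
    c * v (M \ A) ≤ v A ↔ k < A.card ∨ A.card = k ∧ w A = true := by
  have hcard : (M \ A).card + A.card = 2 * k := hM ▸ Finset.card_sdiff_add_card_eq_card hA
  rw [hv A hA, hv (M \ A) Finset.sdiff_subset]
  rcases lt_trichotomy A.card k with h | h | h
  · simp [h, h.ne, h.asymm, show ¬(M \ A).card < k by omega, show k < (M \ A).card by omega,
      hc.not_ge]
  · have hcompl : w (M \ A) = !w A := Bool.eq_not.mpr (hw A hA h).symm
    simp only [h, lt_irrefl, if_false, show (M \ A).card = k by omega, hcompl, true_and, false_or]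
    cases w A <;> simp [hc.not_ge]
  · simp [h, h.ne', show (M \ A).card < k by omega, show ¬A.card < k by omega]

end CEnvyFree

open CEnvyFree in
theorem cef_exists_iff_general {ι : Type*} [DecidableEq ι]
    (k : ℕ) (M : Finset ι) (hM : M.card = 2 * k)
    (c : ℝ) (hc0 : 0 < c)
    (w₁ w₂ : Finset ι → Bool)
    (hw₁ : ∀ A ⊆ M, A.card = k → w₁ A ≠ w₁ (M \ A))
    (hw₂ : ∀ A ⊆ M, A.card = k → w₂ A ≠ w₂ (M \ A))
    (v₁ v₂ : Finset ι → ℝ)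
    (hv₁ : ∀ S ⊆ M, v₁ S =
      if S.card < k then 0
      else if k < S.card then 1
      else if w₁ S then 1
      else 0)
    (hv₂ : ∀ S ⊆ M, v₂ S =
      if S.card < k then 0
      else if k < S.card then 1
      else if w₂ S then 1
      else 0) :
    (∃ A ⊆ M, v₁ A ≥ c * v₁ (M \ A) ∧ v₂ (M \ A) ≥ c * v₂ A) ↔
      (∃ A ⊆ M, A.card = k ∧ w₁ A = true ∧ w₂ (M \ A) = true) := by
  refine exists_congr fun A => and_congr_right fun hA => ?_
  have hcard : (M \ A).card + A.card = 2 * k := hM ▸ Finset.card_sdiff_add_card_eq_card hA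
  have h₂ := mul_val_compl_le_val_iff hM hc0 hw₂ hv₂ (Finset.sdiff_subset (s := M) (t := A))
  rw [Finset.sdiff_sdiff_eq_self hA] at h₂
  rw [ge_iff_le, ge_iff_le, mul_val_compl_le_val_iff hM hc0 hw₁ hv₁ hA, h₂]
  constructor
  · rintro ⟨h₁ | ⟨hk, hw₁A⟩, h₂ | ⟨hk', hw₂A⟩⟩
    all_goals first | omega | exact ⟨hk, hw₁A, hw₂A⟩
  · rintro ⟨hk, hw₁A, hw₂A⟩
    exact ⟨Or.inr ⟨hk, hw₁A⟩, Or.inr ⟨by omega, hw₂A⟩⟩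

/-- For the valuations used in the c-EF lower bound for general valuations, a
c-envy-free allocation exists iff there is a size-`k` bundle `A` with `w₁ A` and
`w₂ (M \ A)` both true. -/
theorem cef_exists_iff {ι : Type*} [DecidableEq ι]
    (k : ℕ) (hk : 1 ≤ k) (M : Finset ι) (hM : M.card = 2 * k)
    (c : ℝ) (hc0 : 0 < c) (hc1 : c ≤ 1)
    (w₁ w₂ : Finset ι → Bool)
    (hw₁ : ∀ A ⊆ M, A.card = k → w₁ A ≠ w₁ (M \ A))
    (hw₂ : ∀ A ⊆ M, A.card = k → w₂ A ≠ w₂ (M \ A))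
    (v₁ v₂ : Finset ι → ℝ)
    (hv₁ : ∀ S ⊆ M, v₁ S =
      if S.card < k then 0
      else if k < S.card then 1
      else if w₁ S then 1
      else 0)
    (hv₂ : ∀ S ⊆ M, v₂ S =
      if S.card < k then 0
      else if k < S.card then 1
      else if w₂ S then 1
      else 0) :
    (∃ A ⊆ M, v₁ A ≥ c * v₁ (M \ A) ∧ v₂ (M \ A) ≥ c * v₂ A) ↔
      (∃ A ⊆ M, A.card = k ∧ w₁ A = true ∧ w₂ (M \ A) = true) :=
  cef_exists_iff_general k M hM c hc0 w₁ w₂ hw₁ hw₂ v₁ v₂ hv₁ hv₂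
end

section
/- Let k ≥ 1, let M be a finite set of 2k items, and for i = 1, 2 let w_i be a Boolean-valued function on subsets of M such that w_i(A) ≠ w_i(M\A) whenever |A| = k. For i = 1, 2 define the valuation v_i on M by: v_i(∅) = 0; v_i(S) = 1 if 0 < |S| < k; v_i(S) = 2 if k < |S| < 2k; v_i(M) = 3; and for |S| = k, v_i(S) = 2 if w_i(S) is true and v_i(S) = 1 if w_i(S) is false. Then for every real c with 2/3 < c ≤ 1, every real c' with 1/2 < c' ≤ 1, and every subset A of M, the allocation (A, M\A) is c-proportional for v₁, v₂ (i.e., v₁(A) ≥ (c/2)·v₁(M) and v₂(M\A) ≥ (c/2)·v₂(M)) if and only if it is c'-envy-free for v₁, v₂ (i.e., v₁(A) ≥ c'·v₁(M\A) and v₂(M\A) ≥ c'·v₂(A)). -/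
/-!
For each player the bundle and its complement have integer values summing to `v M = 3`
(at `#A = k` because `w` separates `A` from `M \ A`). Both fairness conditions for that player
then say that the bundle is worth at least `2`, since the thresholds `3c/2` and `3c'/(1 + c')`
both lie in `(1, 2]`.
-/

open Finset

section Thresholds

variable {c c' : ℝ}

lemma intCast_le_one_or_two_le (n : ℤ) : (n : ℝ) ≤ 1 ∨ 2 ≤ (n : ℝ) := by
  rcases le_or_gt n 1 with hn | hn
  · exact Or.inl (by exact_mod_cast hn)
  · exact Or.inr (by exact_mod_cast hn)

lemma three_halves_mul_le_intCast_iff (hc : 2 / 3 < c) (hc1 : c ≤ 4 / 3) (n : ℤ) :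
    c / 2 * 3 ≤ n ↔ 2 ≤ (n : ℝ) := by
  rcases intCast_le_one_or_two_le n with hn | hn <;> constructor <;> intro h <;> linarith

lemma mul_three_sub_le_intCast_iff (hc' : 1 / 2 < c') (hc'1 : c' ≤ 2) (n : ℤ) :
    c' * (3 - n) ≤ n ↔ 2 ≤ (n : ℝ) := by
  rcases intCast_le_one_or_two_le n with hn | hn <;> constructor <;> intro h <;> nlinarith

end Thresholds

section CardValuation

variable {ι : Type*}

noncomputable def cardValuation (k : ℕ) (w : Finset ι → Bool) (S : Finset ι) : ℝ :=
  if S.card = 0 then 0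
  else if S.card < k then 1
  else if S.card = k then (if w S then 2 else 1)
  else if S.card < 2 * k then 2
  else 3

variable {k : ℕ} {M : Finset ι} {w : Finset ι → Bool}

lemma cardValuation_eq_three (hk : 1 ≤ k) (hM : M.card = 2 * k) :
    cardValuation k w M = 3 := by
  simp only [cardValuation, hM]
  split_ifs <;> first | rfl | omega

lemma exists_cardValuation_eq_intCast (k : ℕ) (w : Finset ι → Bool) (S : Finset ι) :
    ∃ n : ℤ, cardValuation k w S = n := by
  unfold cardValuation
  split_ifs
  all_goals first
    | exact ⟨0, Int.cast_zero.symm⟩ | exact ⟨1, Int.cast_one.symm⟩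
    | exact ⟨2, (Int.cast_ofNat 2).symm⟩ | exact ⟨3, (Int.cast_ofNat 3).symm⟩

lemma cardValuation_add_cardValuation_sdiff [DecidableEq ι] (hk : 1 ≤ k) (hM : M.card = 2 * k)
    {A : Finset ι} (hA : A ⊆ M) (hw : A.card = k → w A ≠ w (M \ A)) :
    cardValuation k w A + cardValuation k w (M \ A) = 3 := by
  have hcard : (M \ A).card = 2 * k - A.card := by rw [card_sdiff_of_subset hA, hM]
  have hle : A.card ≤ 2 * k := hM ▸ card_le_card hA
  unfold cardValuation
  rw [hcard]
  split_ifs <;> first | omega | (have := hw (by omega); simp_all; done) | norm_num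

lemma proportional_iff_envyFree_of_cardValuation [DecidableEq ι] (hk : 1 ≤ k)
    (hM : M.card = 2 * k) (hw : ∀ A ⊆ M, A.card = k → w A ≠ w (M \ A)) {v : Finset ι → ℝ}
    (hv : ∀ S ⊆ M, v S = cardValuation k w S) {c c' : ℝ} (hc : 2 / 3 < c) (hc1 : c ≤ 4 / 3)
    (hc' : 1 / 2 < c') (hc'1 : c' ≤ 2) {A : Finset ι} (hA : A ⊆ M) :
    c / 2 * v M ≤ v A ↔ c' * v (M \ A) ≤ v A := by
  obtain ⟨n, hn⟩ := exists_cardValuation_eq_intCast k w A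
  have hsum := cardValuation_add_cardValuation_sdiff hk hM hA (hw A hA)
  rw [hv M subset_rfl, hv A hA, hv (M \ A) sdiff_subset, cardValuation_eq_three hk hM,
    eq_sub_of_add_eq' hsum, hn, three_halves_mul_le_intCast_iff hc hc1,
    mul_three_sub_le_intCast_iff hc' hc'1]

end CardValuation

/-- For the valuations used in the subadditive lower bounds, an allocation is
c-proportional (for `2/3 < c ≤ 1`) iff it is c'-envy-free (for `1/2 < c' ≤ 1`). -/
theorem cprop_iff_cef {ι : Type*} [DecidableEq ι]
    (k : ℕ) (hk : 1 ≤ k) (M : Finset ι) (hM : M.card = 2 * k)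
    (w₁ w₂ : Finset ι → Bool)
    (hw₁ : ∀ A ⊆ M, A.card = k → w₁ A ≠ w₁ (M \ A))
    (hw₂ : ∀ A ⊆ M, A.card = k → w₂ A ≠ w₂ (M \ A))
    (v₁ v₂ : Finset ι → ℝ)
    (hv₁ : ∀ S ⊆ M, v₁ S =
      if S.card = 0 then 0
      else if S.card < k then 1
      else if S.card = k then (if w₁ S then 2 else 1)
      else if S.card < 2 * k then 2
      else 3)
    (hv₂ : ∀ S ⊆ M, v₂ S =
      if S.card = 0 then 0
      else if S.card < k then 1
      else if S.card = k then (if w₂ S then 2 else 1)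
      else if S.card < 2 * k then 2
      else 3) :
    ∀ c c' : ℝ, 2 / 3 < c → c ≤ 1 → 1 / 2 < c' → c' ≤ 1 →
      ∀ A ⊆ M,
        ((v₁ A ≥ (c / 2) * v₁ M ∧ v₂ (M \ A) ≥ (c / 2) * v₂ M) ↔
          (v₁ A ≥ c' * v₁ (M \ A) ∧ v₂ (M \ A) ≥ c' * v₂ A)) := by
  intro c c' hc hc1 hc' hc'1 A hA
  replace hc1 : c ≤ 4 / 3 := by linarith
  replace hc'1 : c' ≤ 2 := by linarith
  have player₁ := proportional_iff_envyFree_of_cardValuation hk hM hw₁ hv₁ hc hc1 hc' hc'1 hA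
  have player₂ := proportional_iff_envyFree_of_cardValuation hk hM hw₂ hv₂ hc hc1 hc' hc'1
    (sdiff_subset : M \ A ⊆ M)
  rw [Finset.sdiff_sdiff_eq_self hA] at player₂
  exact and_congr player₁ player₂
end
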